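/- If at every step k of a block elimination the Max criterion α · ‖(A_{k,k}^(k))⁻¹‖₁⁻¹ ≥ max_{i>k} ‖A_{i,k}^(k)‖₁ is satisfied, then the growth factor on tile norms is bounded: max_{i,j,k} ‖A_{i,j}^(k)‖₁ / max_{i,j} ‖A_{i,j}‖₁ ≤ (1+α)^{n−1}, where n is the number of tile rows. -/
import Mathlib


/-- The induced matrix 1-norm (maximum absolute column sum). -/
noncomputable def norm1 {ι κ : Type*} [Fintype ι] [Fintype κ] (M : Matrix ι κ ℝ) : ℝ :=
  ⨆ j, ∑ i, |M i j|

lemma norm1_nonneg {ι κ : Type*} [Fintype ι] [Fintype κ] (M : Matrix ι κ ℝ) :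
    0 ≤ norm1 M :=
  Real.iSup_nonneg fun _ => Finset.sum_nonneg fun _ _ => abs_nonneg _

lemma colsum_le_norm1 {ι κ : Type*} [Fintype ι] [Fintype κ] (M : Matrix ι κ ℝ) (j : κ) :
    ∑ i, |M i j| ≤ norm1 M := by
  unfold norm1
  exact le_ciSup (f := fun j => ∑ i, |M i j|) (Set.Finite.bddAbove (Set.finite_range _)) j

lemma norm1_sub_le {ι κ : Type*} [Fintype ι] [Fintype κ] (M N : Matrix ι κ ℝ) :
    norm1 (M - N) ≤ norm1 M + norm1 N := by
  apply Real.iSup_le _ (add_nonneg (norm1_nonneg M) (norm1_nonneg N))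
  intro j
  calc ∑ i, |(M - N) i j| ≤ ∑ i, (|M i j| + |N i j|) := by
        apply Finset.sum_le_sum; intro i _
        rw [Matrix.sub_apply]; exact abs_sub _ _
    _ = (∑ i, |M i j|) + ∑ i, |N i j| := Finset.sum_add_distrib
    _ ≤ norm1 M + norm1 N := add_le_add (colsum_le_norm1 M j) (colsum_le_norm1 N j)

lemma norm1_mul_le {ι κ μ : Type*} [Fintype ι] [Fintype κ] [Fintype μ]
    (M : Matrix ι κ ℝ) (N : Matrix κ μ ℝ) :
    norm1 (M * N) ≤ norm1 M * norm1 N := by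
  apply Real.iSup_le _ (mul_nonneg (norm1_nonneg M) (norm1_nonneg N))
  intro j
  calc ∑ i, |(M * N) i j| ≤ ∑ i, ∑ l, |M i l| * |N l j| := by
        apply Finset.sum_le_sum; intro i _
        rw [Matrix.mul_apply]
        calc |∑ l, M i l * N l j| ≤ ∑ l, |M i l * N l j| := Finset.abs_sum_le_sum_abs _ _
          _ = ∑ l, |M i l| * |N l j| := by simp [abs_mul]
    _ = ∑ l, (∑ i, |M i l|) * |N l j| := by
        rw [Finset.sum_comm]; simp [Finset.sum_mul]
    _ ≤ ∑ l, norm1 M * |N l j| := Finset.sum_le_sum fun l _ =>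
        mul_le_mul_of_nonneg_right (colsum_le_norm1 M l) (abs_nonneg _)
    _ = norm1 M * ∑ l, |N l j| := by rw [Finset.mul_sum]
    _ ≤ norm1 M * norm1 N := mul_le_mul_of_nonneg_left (colsum_le_norm1 N j) (norm1_nonneg M)

/-- If every step of the block elimination satisfies the Max criterion with threshold `α`,
then the growth factor on tile norms is bounded by `(1+α)^(n-1)`. -/
theorem max_criterion_growth_factor
    {n nb : ℕ} (α : ℝ) (hα : 0 < α)
    (A : ℕ → Fin n → Fin n → Matrix (Fin nb) (Fin nb) ℝ)
    (hinv : ∀ k : Fin n, IsUnit (A k.val k k))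
    (hupd : ∀ k : Fin n, ∀ i j : Fin n,
      A (k.val + 1) i j =
        if k < i ∧ k < j then
          A k.val i j - A k.val i k * (A k.val k k)⁻¹ * A k.val k j
        else A k.val i j)
    (hcrit : ∀ k : Fin n, ∀ i, k < i →
      norm1 (A k.val i k) ≤ α * (norm1 ((A k.val k k)⁻¹))⁻¹) :
    (⨆ k : Fin (n + 1), ⨆ i, ⨆ j, norm1 (A k.val i j)) /
        (⨆ i, ⨆ j, norm1 (A 0 i j)) ≤ (1 + α) ^ (n - 1) := by
  set D : ℕ → ℝ := fun m => ⨆ i : Fin n, ⨆ j : Fin n, norm1 (A m i j) with hD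
  have hDnonneg : ∀ m, 0 ≤ D m := fun m =>
    Real.iSup_nonneg fun i => Real.iSup_nonneg fun j => norm1_nonneg _
  have hle : ∀ m (i j : Fin n), norm1 (A m i j) ≤ D m := by
    intro m i j
    calc norm1 (A m i j) ≤ ⨆ j : Fin n, norm1 (A m i j) :=
          le_ciSup (f := fun j => norm1 (A m i j))
            (Set.Finite.bddAbove (Set.finite_range _)) j
      _ ≤ D m := le_ciSup (f := fun i => ⨆ j : Fin n, norm1 (A m i j))
          (Set.Finite.bddAbove (Set.finite_range _)) i
  have hone : (1:ℝ) ≤ 1 + α := by linarith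
  -- the step bound
  have hstep : ∀ k : Fin n, D (k.val + 1) ≤ (1 + α) * D k.val := by
    intro k
    have hpos : (0:ℝ) ≤ (1 + α) * D k.val := mul_nonneg (by linarith) (hDnonneg _)
    apply Real.iSup_le _ hpos
    intro i
    apply Real.iSup_le _ hpos
    intro j
    rw [hupd k i j]
    split_ifs with h
    · have hab : norm1 (A k.val i k) * norm1 ((A k.val k k)⁻¹) ≤ α := by
        rcases eq_or_lt_of_le (norm1_nonneg ((A k.val k k)⁻¹)) with hb | hb
        · rw [← hb, mul_zero]; exact hα.le
        · have h2 := mul_le_mul_of_nonneg_right (hcrit k i h.1) hb.le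
          rwa [mul_assoc, inv_mul_cancel₀ hb.ne', mul_one] at h2
      have hprod : norm1 (A k.val i k * (A k.val k k)⁻¹ * A k.val k j) ≤ α * D k.val := by
        calc norm1 (A k.val i k * (A k.val k k)⁻¹ * A k.val k j)
            ≤ norm1 (A k.val i k * (A k.val k k)⁻¹) * norm1 (A k.val k j) :=
              norm1_mul_le _ _
          _ ≤ (norm1 (A k.val i k) * norm1 ((A k.val k k)⁻¹)) * norm1 (A k.val k j) :=
              mul_le_mul_of_nonneg_right (norm1_mul_le _ _) (norm1_nonneg _)
          _ ≤ α * norm1 (A k.val k j) :=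
              mul_le_mul_of_nonneg_right hab (norm1_nonneg _)
          _ ≤ α * D k.val := mul_le_mul_of_nonneg_left (hle _ _ _) hα.le
      calc norm1 (A k.val i j - A k.val i k * (A k.val k k)⁻¹ * A k.val k j)
          ≤ norm1 (A k.val i j) + norm1 (A k.val i k * (A k.val k k)⁻¹ * A k.val k j) :=
            norm1_sub_le _ _
        _ ≤ D k.val + α * D k.val := add_le_add (hle _ _ _) hprod
        _ = (1 + α) * D k.val := by ring
    · calc norm1 (A k.val i j) ≤ D k.val := hle _ _ _
        _ ≤ (1 + α) * D k.val := le_mul_of_one_le_left (hDnonneg _) hone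
  -- the last step does nothing
  have hlast : ∀ (hn : 0 < n) (i j : Fin n), A n i j = A (n - 1) i j := by
    intro hn i j
    have hk : n - 1 < n := Nat.sub_lt hn one_pos
    have h1 : (⟨n - 1, hk⟩ : Fin n).val + 1 = n := Nat.succ_pred_eq_of_pos hn
    have h2 := hupd ⟨n - 1, hk⟩ i j
    rw [h1] at h2
    rw [h2, if_neg]
    rintro ⟨hi, -⟩
    have : i.val < n := i.isLt
    have : n - 1 < i.val := hi
    omega
  have key : ∀ m : ℕ, m ≤ n → D m ≤ (1 + α) ^ (min m (n - 1)) * D 0 := by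
    intro m
    induction m with
    | zero => intro _; simp
    | succ m ih =>
      intro hm
      have ihm := ih (Nat.le_of_succ_le hm)
      by_cases hc : m + 1 ≤ n - 1
      · have hmn : m < n := lt_of_lt_of_le (Nat.lt_succ_self m) hm
        have hminm : min m (n - 1) = m := Nat.min_eq_left (Nat.le_of_succ_le hc)
        have hmin : min (m + 1) (n - 1) = m + 1 := Nat.min_eq_left hc
        rw [hmin]
        calc D (m + 1) ≤ (1 + α) * D m := hstep ⟨m, hmn⟩
          _ ≤ (1 + α) * ((1 + α) ^ (min m (n - 1)) * D 0) :=
              mul_le_mul_of_nonneg_left ihm (by linarith)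
          _ = (1 + α) ^ (m + 1) * D 0 := by rw [hminm]; ring
      · have hm1 : m + 1 = n := by omega
        have hn : 0 < n := by omega
        have hmeq : m = n - 1 := by omega
        have hDeq : D (m + 1) ≤ D m := by
          apply Real.iSup_le _ (hDnonneg m)
          intro i
          apply Real.iSup_le _ (hDnonneg m)
          intro j
          have := hlast hn i j
          rw [hm1, this, ← hmeq]
          exact hle m i j
        have hmin1 : min (m + 1) (n - 1) = n - 1 := by omega
        have hmin2 : min m (n - 1) = n - 1 := by omega
        rw [hmin1]
        calc D (m + 1) ≤ D m := hDeq
          _ ≤ (1 + α) ^ (min m (n - 1)) * D 0 := ihm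
          _ = (1 + α) ^ (n - 1) * D 0 := by rw [hmin2]
  have hnum : (⨆ k : Fin (n + 1), ⨆ i, ⨆ j, norm1 (A k.val i j)) ≤
      (1 + α) ^ (n - 1) * D 0 := by
    apply Real.iSup_le _ (mul_nonneg (by positivity) (hDnonneg 0))
    intro k
    calc D k.val ≤ (1 + α) ^ (min k.val (n - 1)) * D 0 := key k.val (Nat.lt_succ_iff.mp k.isLt)
      _ ≤ (1 + α) ^ (n - 1) * D 0 := by
          apply mul_le_mul_of_nonneg_right _ (hDnonneg 0)
          exact pow_le_pow_right₀ hone (min_le_right _ _)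
  rcases eq_or_lt_of_le (hDnonneg 0) with h0 | h0
  · have : (⨆ i : Fin n, ⨆ j : Fin n, norm1 (A 0 i j)) = 0 := h0.symm
    rw [this, div_zero]
    positivity
  · rw [div_le_iff₀ h0]
    exact hnum
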